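/- arXiv:1804.05464 — 6 statements merged into one kernel-verified Lean document; each statement's English description precedes it below -/
import Mathlib

section
/- Let n ≥ 1 and m₁, …, mₙ ≥ 1 with m = m₁ + ⋯ + mₙ, and let J be a real m × m matrix, block-partitioned according to (m₁, …, mₙ), whose i-th diagonal block J_ii ∈ ℝ^{mᵢ×mᵢ} satisfies vᵀ J_ii v > 0 for every nonzero v ∈ ℝ^{mᵢ}. Then tr(J) = Σᵢ tr(J_ii) > 0, and J has at least one complex eigenvalue with strictly positive real part; in particular it is impossible that every eigenvalue of J has nonpositive real part. -/
open Matrix Polynomial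

/-! The trace of `J` is the sum of the traces of its diagonal blocks, and each of these is
positive because the diagonal entries `eₐᵀ J_ii eₐ` of a block are. Over `ℂ` the trace is also
the sum of the roots of the characteristic polynomial, so the real parts of these roots have
positive sum and one of them must be positive. -/

namespace Matrix

theorem trace_eq_sum_trace_blockDiag' {ι R : Type*} [Fintype ι] [AddCommMonoid R]
    {κ : ι → Type*} [∀ i, Fintype (κ i)] (A : Matrix (Σ i, κ i) (Σ i, κ i) R) :
    A.trace = ∑ i, (A.blockDiag' i).trace := by
  rw [trace, ← Finset.univ_sigma_univ, Finset.sum_sigma]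
  rfl

theorem diag_pos_of_forall_dotProduct_mulVec_pos {n R : Type*} [Fintype n] [DecidableEq n]
    [Semiring R] [Nontrivial R] [PartialOrder R] {A : Matrix n n R}
    (hA : ∀ v : n → R, v ≠ 0 → 0 < v ⬝ᵥ A *ᵥ v) (a : n) : 0 < A a a := by
  simpa using hA (Pi.single a 1) (by simp)

theorem trace_pos_of_forall_dotProduct_mulVec_pos {n R : Type*} [Fintype n] [Nonempty n]
    [DecidableEq n] [Semiring R] [Nontrivial R] [PartialOrder R] [IsOrderedCancelAddMonoid R]
    {A : Matrix n n R} (hA : ∀ v : n → R, v ≠ 0 → 0 < v ⬝ᵥ A *ᵥ v) : 0 < A.trace :=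
  Finset.sum_pos (fun a _ => diag_pos_of_forall_dotProduct_mulVec_pos hA a) Finset.univ_nonempty

theorem sum_aroots_charpoly {n K L : Type*} [Fintype n] [DecidableEq n] [CommRing K] [Field L]
    [IsAlgClosed L] [Algebra K L] (A : Matrix n n K) :
    (A.charpoly.aroots L).sum = algebraMap K L A.trace := by
  rw [aroots, ← charpoly_map, ← trace_eq_sum_roots_charpoly, AddMonoidHom.map_trace]

end Matrix

theorem Complex.exists_mem_re_pos_of_re_sum_pos {s : Multiset ℂ} (hs : 0 < s.sum.re) :
    ∃ z ∈ s, 0 < z.re := by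
  by_contra! h
  have hle := Multiset.sum_le_card_nsmul (s.map reAddGroupHom) 0 (by simpa using h)
  rw [← map_multiset_sum, nsmul_zero] at hle
  exact hle.not_gt hs

/-- If `J` is a real `m × m` matrix block-partitioned according to
`(m₁, …, mₙ)` whose every diagonal block `J_ii` satisfies `vᵀ J_ii v > 0` for all nonzero
`v`, then `tr J = Σᵢ tr J_ii > 0` and `J` has a complex eigenvalue (root of its
characteristic polynomial over `ℂ`) with strictly positive real part; in particular not
all eigenvalues of `J` have nonpositive real part. -/
theorem stmt_0 {n : ℕ} (hn : 1 ≤ n) (m : Fin n → ℕ) (hm : ∀ i, 1 ≤ m i)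
    (J : Matrix ((i : Fin n) × Fin (m i)) ((i : Fin n) × Fin (m i)) ℝ)
    (hblocks : ∀ (i : Fin n) (v : Fin (m i) → ℝ), v ≠ 0 →
      0 < v ⬝ᵥ (Matrix.of fun a b => J ⟨i, a⟩ ⟨i, b⟩) *ᵥ v) :
    J.trace = ∑ i : Fin n, Matrix.trace (Matrix.of fun a b => J ⟨i, a⟩ ⟨i, b⟩) ∧
    0 < J.trace ∧
    (∃ lam ∈ J.charpoly.aroots ℂ, 0 < lam.re) ∧
    ¬ (∀ lam ∈ J.charpoly.aroots ℂ, lam.re ≤ 0) := by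
  have htrace := J.trace_eq_sum_trace_blockDiag'
  have hpos : 0 < J.trace := by
    have : Nonempty (Fin n) := Fin.pos_iff_nonempty.mp hn
    rw [htrace]
    refine Finset.sum_pos (fun i _ => ?_) Finset.univ_nonempty
    have : Nonempty (Fin (m i)) := Fin.pos_iff_nonempty.mp (hm i)
    exact trace_pos_of_forall_dotProduct_mulVec_pos (hblocks i)
  have hroot : ∃ lam ∈ J.charpoly.aroots ℂ, 0 < lam.re :=
    Complex.exists_mem_re_pos_of_re_sum_pos (by simpa [sum_aroots_charpoly] using hpos)
  obtain ⟨lam, hlam, hre⟩ := hroot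
  exact ⟨htrace, hpos, ⟨lam, hlam, hre⟩, fun h => (h lam hlam).not_gt hre⟩
end

section
/- Fix real numbers a, b, c, d with a > 0, d > 0, and a·d < b·c. Consider the two-player game on ℝ × ℝ with costs f₁(x₁, x₂) = (a/2)x₁² + b·x₁x₂ and f₂(x₁, x₂) = (d/2)x₂² + c·x₁x₂, and let ω(x₁, x₂) = (∂f₁/∂x₁, ∂f₂/∂x₂) = (a·x₁ + b·x₂, c·x₁ + d·x₂). Then: (i) (0,0) is a zero of ω, ∂²f₁/∂x₁²(0,0) = a > 0, ∂²f₂/∂x₂²(0,0) = d > 0, and det Dω(0,0) = a·d − b·c ≠ 0, so (0,0) is a nondegenerate differential Nash equilibrium; (ii) (0,0) is a local Nash equilibrium: f₁(x₁, 0) ≥ f₁(0,0) for all x₁ and f₂(0, x₂) ≥ f₂(0,0) for all x₂; (iii) the Jacobian Dω(0,0) = [[a, b],[c, d]] has one strictly negative and one strictly positive real eigenvalue, i.e., (0,0) is a strict saddle point of ẋ = −ω(x). -/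
open Matrix Polynomial

/-! Against the other player's zero strategy each player's own cost is `a x₁² / 2` resp.
`d x₂² / 2`, minimal at `0`. The cross terms `b`, `c` only enter the Jacobian `[[a, b], [c, d]]`,
whose determinant `a d - b c` is negative; as the determinant is the product of the eigenvalues,
the characteristic polynomial `X² - (a + d) X + (a d - b c)` has a negative and a positive real
root. -/

theorem hasDerivAt_half_mul_sq_add_mul (p q x : ℝ) :
    HasDerivAt (fun y => p / 2 * y ^ 2 + q * y) (p * x + q) x := by
  refine (((hasDerivAt_pow 2 x).const_mul (p / 2)).add
    ((hasDerivAt_id' x).const_mul q)).congr_deriv ?_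
  norm_num
  ring

theorem deriv_half_mul_sq_add_mul (p q : ℝ) :
    deriv (fun y => p / 2 * y ^ 2 + q * y) = fun x => p * x + q :=
  funext fun x => (hasDerivAt_half_mul_sq_add_mul p q x).deriv

theorem deriv_deriv_half_mul_sq_add_mul (p q : ℝ) :
    deriv (deriv fun y => p / 2 * y ^ 2 + q * y) = fun _ => p := by
  rw [deriv_half_mul_sq_add_mul]
  exact funext fun x => (((hasDerivAt_id x).const_mul p).add_const q).deriv.trans (mul_one p)

theorem exists_neg_pos_add_eq_mul_eq_of_neg (t : ℝ) {δ : ℝ} (hδ : δ < 0) :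
    ∃ lm lp : ℝ, lm < 0 ∧ 0 < lp ∧ lm + lp = t ∧ lm * lp = δ := by
  set s := Real.sqrt (t ^ 2 - 4 * δ)
  have hs_sq : s ^ 2 = t ^ 2 - 4 * δ := Real.sq_sqrt (by nlinarith)
  have hs_gt : |t| < s := by
    rw [← Real.sqrt_sq_eq_abs]
    exact Real.sqrt_lt_sqrt (sq_nonneg _) (by linarith)
  obtain ⟨hts, hst⟩ := abs_lt.mp hs_gt
  -- the two roots of `y² - t y + δ`
  exact ⟨(t - s) / 2, (t + s) / 2, by linarith, by linarith, by ring,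
    by linear_combination -hs_sq / 4⟩

theorem Polynomial.X_sub_C_mul_X_sub_C {R : Type*} [CommRing R] (r₁ r₂ : R) :
    (X - C r₁) * (X - C r₂) = X ^ 2 - C (r₁ + r₂) * X + C (r₁ * r₂) := by
  rw [C_add, C_mul]
  ring

theorem Polynomial.aroots_X_sub_C_mul_X_sub_C (r₁ r₂ : ℝ) :
    ((X - C r₁) * (X - C r₂)).aroots ℂ = {(r₁ : ℂ), (r₂ : ℂ)} := by
  rw [aroots_mul (mul_ne_zero (X_sub_C_ne_zero r₁) (X_sub_C_ne_zero r₂)), aroots_X_sub_C,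
    aroots_X_sub_C]
  rfl

theorem Matrix.exists_neg_pos_aroots_charpoly_of_det_neg {A : Matrix (Fin 2) (Fin 2) ℝ}
    (hA : A.det < 0) :
    ∃ lm lp : ℝ, lm < 0 ∧ 0 < lp ∧ A.charpoly.aroots ℂ = {(lm : ℂ), (lp : ℂ)} := by
  obtain ⟨lm, lp, hlm, hlp, hsum, hprod⟩ := exists_neg_pos_add_eq_mul_eq_of_neg A.trace hA
  refine ⟨lm, lp, hlm, hlp, ?_⟩
  rw [charpoly_fin_two, ← hsum, ← hprod, ← X_sub_C_mul_X_sub_C, aroots_X_sub_C_mul_X_sub_C]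

/-- For `a > 0`, `d > 0`, `a·d < b·c`, the game with costs
`f₁(x₁,x₂) = (a/2)x₁² + b·x₁x₂` and `f₂(x₁,x₂) = (d/2)x₂² + c·x₁x₂` has
`ω(x₁,x₂) = (a·x₁ + b·x₂, c·x₁ + d·x₂)`; the origin is a zero of `ω` with
`∂²f₁/∂x₁² = a > 0`, `∂²f₂/∂x₂² = d > 0`, `det Dω(0,0) ≠ 0` (a nondegenerate differential
Nash equilibrium), it is a local (indeed global in each player's variable) Nash
equilibrium, and the Jacobian `Dω(0,0) = [[a,b],[c,d]]` has one strictly negative and one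
strictly positive real eigenvalue — a strict saddle of `ẋ = -ω(x)`. -/
theorem stmt_3 (a b c d : ℝ) (ha : 0 < a) (hd : 0 < d) (hsad : a * d < b * c)
    (f₁ f₂ : ℝ → ℝ → ℝ)
    (hf₁ : ∀ x₁ x₂, f₁ x₁ x₂ = a / 2 * x₁ ^ 2 + b * x₁ * x₂)
    (hf₂ : ∀ x₁ x₂, f₂ x₁ x₂ = d / 2 * x₂ ^ 2 + c * x₁ * x₂) :
    -- ω is the vector of the players' own partial derivatives
    (∀ x₁ x₂ : ℝ, deriv (fun y => f₁ y x₂) x₁ = a * x₁ + b * x₂) ∧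
    (∀ x₁ x₂ : ℝ, deriv (fun y => f₂ x₁ y) x₂ = c * x₁ + d * x₂) ∧
    -- (i) the origin is a zero of ω, the own-block second derivatives are a, d > 0,
    -- and the Jacobian is nondegenerate
    (a * 0 + b * 0 = 0 ∧ c * 0 + d * 0 = 0) ∧
    (∀ x₁ x₂ : ℝ, deriv (deriv (fun y => f₁ y x₂)) x₁ = a) ∧
    (∀ x₁ x₂ : ℝ, deriv (deriv (fun y => f₂ x₁ y)) x₂ = d) ∧
    (!![a, b; c, d]).det = a * d - b * c ∧ (!![a, b; c, d]).det ≠ 0 ∧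
    -- (ii) the origin is a local Nash equilibrium
    (∀ x₁ : ℝ, f₁ 0 0 ≤ f₁ x₁ 0) ∧ (∀ x₂ : ℝ, f₂ 0 0 ≤ f₂ 0 x₂) ∧
    -- (iii) the Jacobian has one negative and one positive real eigenvalue
    (∃ lm lp : ℝ, lm < 0 ∧ 0 < lp ∧
      (!![a, b; c, d]).charpoly.aroots ℂ = {(lm : ℂ), (lp : ℂ)}) := by
  have own₁ (x₂ : ℝ) : (fun y => f₁ y x₂) = fun y => a / 2 * y ^ 2 + b * x₂ * y :=
    funext fun y => by rw [hf₁]; ring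
  have own₂ (x₁ : ℝ) : (fun y => f₂ x₁ y) = fun y => d / 2 * y ^ 2 + c * x₁ * y :=
    funext (hf₂ x₁)
  have hdet_neg : (!![a, b; c, d]).det < 0 := by rw [det_fin_two_of]; linarith
  refine ⟨fun x₁ x₂ => ?_, fun x₁ x₂ => ?_, by simp, fun x₁ x₂ => ?_, fun x₁ x₂ => ?_,
    det_fin_two_of a b c d, hdet_neg.ne, fun x₁ => ?_, fun x₂ => ?_,
    exists_neg_pos_aroots_charpoly_of_det_neg hdet_neg⟩
  · rw [own₁, deriv_half_mul_sq_add_mul]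
  · rw [own₂, deriv_half_mul_sq_add_mul]; ring
  · rw [own₁, deriv_deriv_half_mul_sq_add_mul]
  · rw [own₂, deriv_deriv_half_mul_sq_add_mul]
  · rw [hf₁, hf₁]; nlinarith [sq_nonneg x₁]
  · rw [hf₂, hf₂]; nlinarith [sq_nonneg x₂]
end

section
/- Let A ∈ ℝ^{m₁×m₁} and C ∈ ℝ^{m₂×m₂} be symmetric positive definite matrices and let B ∈ ℝ^{m₁×m₂} be arbitrary. Form the (m₁+m₂) × (m₁+m₂) block matrix M = [[A, B],[−Bᵀ, C]]. Then vᵀ M v > 0 for every nonzero v ∈ ℝ^{m₁+m₂}, M is invertible, and every complex eigenvalue of M has strictly positive real part. -/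
/-!
The skew off-diagonal blocks cancel in the quadratic form, so `vᵀ M v = xᵀ A x + yᵀ C y > 0`
for `v = (x, y) ≠ 0`. A nonzero kernel vector would give `vᵀ M v = 0`, so `M` is invertible.
If `M w = λ w` with `0 ≠ w = u + i v ∈ ℂⁿ`, then `w* M w = λ ‖w‖²` and
`Re (w* M w) = uᵀ M u + vᵀ M v > 0`, hence `Re λ > 0`.
-/

open Matrix Polynomial

namespace Matrix

variable {m n : Type*} [Fintype m] [Fintype n]

theorem sumElim_dotProduct_fromBlocks_neg_transpose_mulVec {R : Type*} [CommRing R]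
    (A : Matrix m m R) (B : Matrix m n R) (C : Matrix n n R) (x : m → R) (y : n → R) :
    Sum.elim x y ⬝ᵥ fromBlocks A B (-Bᵀ) C *ᵥ Sum.elim x y = x ⬝ᵥ A *ᵥ x + y ⬝ᵥ C *ᵥ y := by
  have hB : y ⬝ᵥ (-Bᵀ) *ᵥ x = -(x ⬝ᵥ B *ᵥ y) := by
    rw [neg_mulVec, dotProduct_neg, dotProduct_mulVec, vecMul_transpose, dotProduct_comm]
  rw [fromBlocks_mulVec, sumElim_dotProduct_sumElim, Sum.elim_comp_inl, Sum.elim_comp_inr,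
    dotProduct_add, dotProduct_add, hB]
  ring

theorem dotProduct_sumElim_mulVec_pos {R : Type*} [CommRing R] [PartialOrder R]
    [IsOrderedRing R] {A : Matrix m m R} {C : Matrix n n R}
    (hA : ∀ x, x ≠ 0 → 0 < x ⬝ᵥ A *ᵥ x) (hC : ∀ y, y ≠ 0 → 0 < y ⬝ᵥ C *ᵥ y)
    {x : m → R} {y : n → R} (hxy : Sum.elim x y ≠ 0) :
    0 < x ⬝ᵥ A *ᵥ x + y ⬝ᵥ C *ᵥ y := by
  rcases eq_or_ne x 0 with rfl | hx
  · have hy : y ≠ 0 := by rintro rfl; exact hxy (by ext (_ | _) <;> rfl)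
    simpa using hC y hy
  rcases eq_or_ne y 0 with rfl | hy
  · simpa using hA x hx
  · exact add_pos (hA x hx) (hC y hy)

theorem PosDef.dotProduct_mulVec_pos_of_trivialStar {R : Type*} [CommRing R] [StarRing R]
    [TrivialStar R] [PartialOrder R] [StarOrderedRing R] {A : Matrix n n R} (hA : A.PosDef)
    {x : n → R} (hx : x ≠ 0) : 0 < x ⬝ᵥ A *ᵥ x := by
  simpa using hA.dotProduct_mulVec_pos hx

theorem isUnit_of_forall_dotProduct_mulVec_pos {K : Type*} [Field K] [PartialOrder K]
    [DecidableEq n] {M : Matrix n n K} (hM : ∀ v, v ≠ 0 → 0 < v ⬝ᵥ M *ᵥ v) : IsUnit M := by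
  rw [isUnit_iff_isUnit_det, isUnit_iff_ne_zero]
  intro hdet
  obtain ⟨v, hv, hMv⟩ := exists_mulVec_eq_zero_iff.2 hdet
  simpa [hMv] using hM v hv

theorem re_star_dotProduct_map_mulVec (M : Matrix n n ℝ) (w : n → ℂ) :
    (star w ⬝ᵥ M.map (algebraMap ℝ ℂ) *ᵥ w).re =
      (fun i ↦ (w i).re) ⬝ᵥ M *ᵥ (fun i ↦ (w i).re) +
        (fun i ↦ (w i).im) ⬝ᵥ M *ᵥ (fun i ↦ (w i).im) := by
  simp only [dotProduct, mulVec, map_apply, Complex.coe_algebraMap, Pi.star_apply,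
    Finset.mul_sum, Complex.re_sum, ← Finset.sum_add_distrib]
  refine Finset.sum_congr rfl fun i _ ↦ Finset.sum_congr rfl fun j _ ↦ ?_
  simp only [Complex.mul_re, Complex.mul_im, Complex.star_def, Complex.conj_re, Complex.conj_im,
    Complex.ofReal_re, Complex.ofReal_im]
  ring

theorem re_star_dotProduct_map_mulVec_pos {M : Matrix n n ℝ}
    (hM : ∀ v, v ≠ 0 → 0 < v ⬝ᵥ M *ᵥ v) {w : n → ℂ} (hw : w ≠ 0) :
    0 < (star w ⬝ᵥ M.map (algebraMap ℝ ℂ) *ᵥ w).re := by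
  rw [re_star_dotProduct_map_mulVec]
  -- `(Re w, Im w)` is one nonzero real vector indexed by `n ⊕ n`
  refine dotProduct_sumElim_mulVec_pos hM hM fun h ↦ hw (funext fun i ↦ ?_)
  exact Complex.ext (congrFun h (Sum.inl i)) (congrFun h (Sum.inr i))

open ComplexOrder in
theorem re_pos_of_mem_aroots_charpoly [DecidableEq n] {M : Matrix n n ℝ}
    (hM : ∀ v, v ≠ 0 → 0 < v ⬝ᵥ M *ᵥ v) {lam : ℂ} (hlam : lam ∈ M.charpoly.aroots ℂ) :
    0 < lam.re := by
  rw [mem_aroots, ← eval_map_algebraMap, ← charpoly_map, eval_charpoly] at hlam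
  obtain ⟨w, hw, hMw⟩ := exists_mulVec_eq_zero_iff.2 hlam.2
  rw [sub_mulVec, sub_eq_zero, scalar_apply, ← smul_one_eq_diagonal, smul_mulVec,
    one_mulVec] at hMw
  have hquad : star w ⬝ᵥ M.map (algebraMap ℝ ℂ) *ᵥ w = lam * (star w ⬝ᵥ w) := by
    rw [← hMw, dotProduct_smul, smul_eq_mul]
  obtain ⟨hre, him⟩ := Complex.pos_iff.1 (dotProduct_star_self_pos_iff.2 hw)
  have := re_star_dotProduct_map_mulVec_pos hM hw
  rw [hquad, Complex.mul_re, ← him, mul_zero, sub_zero] at this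
  exact pos_of_mul_pos_left this hre.le

end Matrix

/-- If `A`, `C` are symmetric positive definite and `B` is arbitrary,
then the block matrix `M = [[A, B], [-Bᵀ, C]]` satisfies `vᵀ M v > 0` for all nonzero
`v`, is invertible, and all of its complex eigenvalues (roots of its characteristic
polynomial over `ℂ`) have strictly positive real part. -/
theorem stmt_5 {m₁ m₂ : ℕ}
    (A : Matrix (Fin m₁) (Fin m₁) ℝ) (C : Matrix (Fin m₂) (Fin m₂) ℝ)
    (B : Matrix (Fin m₁) (Fin m₂) ℝ) (hA : A.PosDef) (hC : C.PosDef) :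
    (∀ v : Fin m₁ ⊕ Fin m₂ → ℝ, v ≠ 0 →
      0 < v ⬝ᵥ (Matrix.fromBlocks A B (-Bᵀ) C) *ᵥ v) ∧
    IsUnit (Matrix.fromBlocks A B (-Bᵀ) C) ∧
    (∀ lam ∈ (Matrix.fromBlocks A B (-Bᵀ) C).charpoly.aroots ℂ, 0 < lam.re) := by
  have hM : ∀ v : Fin m₁ ⊕ Fin m₂ → ℝ, v ≠ 0 → 0 < v ⬝ᵥ fromBlocks A B (-Bᵀ) C *ᵥ v := by
    intro v hv
    rw [← Sum.elim_comp_inl_inr v] at hv ⊢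
    rw [sumElim_dotProduct_fromBlocks_neg_transpose_mulVec]
    exact dotProduct_sumElim_mulVec_pos (fun _ ↦ hA.dotProduct_mulVec_pos_of_trivialStar)
      (fun _ ↦ hC.dotProduct_mulVec_pos_of_trivialStar) hv
  exact ⟨hM, isUnit_of_forall_dotProduct_mulVec_pos hM,
    fun _ ↦ re_pos_of_mem_aroots_charpoly hM⟩
end

section
/- Fix real numbers a, b, c with a > c > 0 and b² > a·c. Consider the two-player zero-sum game (f, −f) on ℝ × ℝ with f(x₁, x₂) = (a/2)x₁² + b·x₁x₂ + (c/2)x₂², and let ω(x₁, x₂) = (∂f/∂x₁, −∂f/∂x₂) = (a·x₁ + b·x₂, −b·x₁ − c·x₂). Then: (i) (0,0) is the unique zero of ω; (ii) both complex eigenvalues of the Jacobian Dω = [[a, b],[−b, −c]] have strictly positive real part, so (0,0) is a locally asymptotically stable equilibrium of ẋ = −ω(x); (iii) (0,0) is not a local Nash equilibrium of (f, −f): for every x₂ ≠ 0, −f(0, x₂) = −(c/2)x₂² < 0 = −f(0, 0), so the second player (whose cost is −f) can strictly decrease its cost by arbitrarily small unilateral deviations. -/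
open Matrix Polynomial

/-!
`ω` is linear with matrix `Dω = [[a, b], [-b, -c]]`, whose trace `a - c` and determinant
`b² - ac` are both positive. A nonzero determinant makes the origin the only zero of `ω`; the
eigenvalues are the roots of `X² - (a - c) X + (b² - ac)`, and a non-real root has real part
`(a - c) / 2 > 0` while a real root `x` satisfies `(a - c) x = x² + b² - ac > 0`. Meanwhile
`-f (0, x₂) = -(c/2) x₂²` is strictly maximal at `x₂ = 0` because `c > 0`.
-/

theorem deriv_quadratic (p q r x : ℝ) :
    deriv (fun y => p * y ^ 2 + q * y + r) x = 2 * p * x + q := by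
  have h : HasDerivAt (fun y => p * y ^ 2 + q * y + r) (p * (2 * x) + q) x := by
    simpa using (((hasDerivAt_pow 2 x).const_mul p).add ((hasDerivAt_id x).const_mul q)).add_const r
  rw [h.deriv]
  ring

theorem eq_zero_of_linear_two_of_det_ne_zero {p q r s x y : ℝ} (hdet : p * s - q * r ≠ 0)
    (h₁ : p * x + q * y = 0) (h₂ : r * x + s * y = 0) : x = 0 ∧ y = 0 := by
  have hx : (p * s - q * r) * x = 0 := by linear_combination s * h₁ - q * h₂
  have hy : (p * s - q * r) * y = 0 := by linear_combination p * h₂ - r * h₁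
  exact ⟨(mul_eq_zero.mp hx).resolve_left hdet, (mul_eq_zero.mp hy).resolve_left hdet⟩

theorem Complex.re_pos_of_sq_sub_mul_add_eq_zero {t d : ℝ} (ht : 0 < t) (hd : 0 < d) {z : ℂ}
    (hz : z ^ 2 - t * z + d = 0) : 0 < z.re := by
  have hre : z.re ^ 2 - z.im ^ 2 - t * z.re + d = 0 := by
    simpa [sq] using congrArg Complex.re hz
  have him : z.im * (2 * z.re - t) = 0 := by
    have := congrArg Complex.im hz
    simp only [sq, Complex.add_im, Complex.sub_im, Complex.mul_im, Complex.ofReal_re,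
      Complex.ofReal_im, Complex.zero_im] at this
    linear_combination this
  rcases mul_eq_zero.mp him with hreal | hcentre
  · rw [hreal] at hre
    nlinarith
  · linarith

theorem Matrix.re_pos_of_mem_aroots_charpoly_s7 (A : Matrix (Fin 2) (Fin 2) ℝ) (ht : 0 < A.trace)
    (hd : 0 < A.det) {z : ℂ} (hz : z ∈ A.charpoly.aroots ℂ) : 0 < z.re := by
  rw [charpoly_fin_two, mem_aroots] at hz
  refine Complex.re_pos_of_sq_sub_mul_add_eq_zero ht hd ?_
  simpa using hz.2

/-- For `a > c > 0` and `b² > a·c`, the zero-sum game `(f, -f)` with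
`f(x₁,x₂) = (a/2)x₁² + b·x₁x₂ + (c/2)x₂²` and
`ω(x₁,x₂) = (∂f/∂x₁, -∂f/∂x₂) = (a·x₁ + b·x₂, -b·x₁ - c·x₂)` satisfies: (i) the origin
is the unique zero of `ω`; (ii) both eigenvalues of `Dω = [[a,b],[-b,-c]]` have strictly
positive real part, so the origin is locally asymptotically stable for `ẋ = -ω(x)`;
(iii) the origin is not a local Nash equilibrium: the second player (cost `-f`) strictly
decreases its cost by any nonzero unilateral deviation. -/
theorem stmt_7 (a b c : ℝ) (hc : 0 < c) (hca : c < a) (hb : a * c < b ^ 2)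
    (f : ℝ → ℝ → ℝ)
    (hf : ∀ x₁ x₂, f x₁ x₂ = a / 2 * x₁ ^ 2 + b * x₁ * x₂ + c / 2 * x₂ ^ 2) :
    -- ω is (player 1's own partial of f, player 2's own partial of -f)
    (∀ x₁ x₂ : ℝ, deriv (fun y => f y x₂) x₁ = a * x₁ + b * x₂) ∧
    (∀ x₁ x₂ : ℝ, deriv (fun y => -f x₁ y) x₂ = -b * x₁ - c * x₂) ∧
    -- (i) the origin is the unique zero of ω
    (∀ x₁ x₂ : ℝ, (a * x₁ + b * x₂ = 0 ∧ -b * x₁ - c * x₂ = 0) ↔ (x₁ = 0 ∧ x₂ = 0)) ∧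
    -- (ii) every eigenvalue of the Jacobian has strictly positive real part
    (∀ lam ∈ (!![a, b; -b, -c]).charpoly.aroots ℂ, 0 < lam.re) ∧
    -- (iii) not a local Nash equilibrium: player 2 deviates profitably
    (∀ x₂ : ℝ, x₂ ≠ 0 → -f 0 x₂ < -f 0 0) := by
  have hdet : 0 < (!![a, b; -b, -c]).det := by rw [det_fin_two_of]; linarith
  refine ⟨fun x₁ x₂ => ?_, fun x₁ x₂ => ?_, fun x₁ x₂ => ?_, fun lam => ?_,
    fun x₂ hx₂ => ?_⟩
  · have hpartial :
        (fun y => f y x₂) = fun y => a / 2 * y ^ 2 + b * x₂ * y + c / 2 * x₂ ^ 2 :=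
      funext fun y => by rw [hf]; ring
    rw [hpartial, deriv_quadratic]
    ring
  · have hpartial :
        (fun y => -f x₁ y) = fun y => -c / 2 * y ^ 2 + -b * x₁ * y + -a / 2 * x₁ ^ 2 :=
      funext fun y => by rw [hf]; ring
    rw [hpartial, deriv_quadratic]
    ring
  · rw [det_fin_two_of] at hdet
    refine ⟨fun ⟨h₁, h₂⟩ =>
      eq_zero_of_linear_two_of_det_ne_zero hdet.ne' h₁ (by linear_combination h₂), ?_⟩
    rintro ⟨rfl, rfl⟩
    simp
  · have htrace : 0 < (!![a, b; -b, -c]).trace := by rw [trace_fin_two_of]; linarith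
    exact (!![a, b; -b, -c]).re_pos_of_mem_aroots_charpoly_s7 htrace hdet
  · have hsq : 0 < x₂ ^ 2 := by positivity
    simp only [hf]
    nlinarith [mul_pos hc hsq]
end

section
/- Let φ : ℝ^m → ℝ be twice continuously differentiable, let m = m₁ + ⋯ + mₙ be a block decomposition of the coordinates, and consider the potential game (f₁, …, fₙ) in which Dᵢfᵢ(x) = Dᵢφ(x) for each i, so that ω(x) = ∇φ(x) and Dω(x) = D²φ(x), the (symmetric) Hessian of φ. Suppose x* is a locally asymptotically stable equilibrium of ẋ = −ω(x), i.e., ∇φ(x*) = 0 and every complex eigenvalue of D²φ(x*) has strictly positive real part. Then D²φ(x*) is positive definite, det D²φ(x*) ≠ 0, and each diagonal block Dᵢ²φ(x*) ∈ ℝ^{mᵢ×mᵢ} (the principal submatrix of D²φ(x*) on the i-th coordinate block) is positive definite; hence x* is a nondegenerate differential Nash equilibrium of the game. -/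
open Matrix Polynomial

/-
Since `ω = ∇φ`, the Jacobian `Dω(x*)` is the Hessian of `φ`, which is symmetric by Schwarz's
theorem. A real symmetric matrix has only real eigenvalues, so the stability hypothesis makes
all of them positive: the Hessian is positive definite. Positive definiteness gives `det > 0`
and passes to every principal submatrix, in particular to each player's diagonal block.
-/

lemma Matrix.IsHermitian.ofReal_eigenvalues_mem_aroots {ι : Type*} [Fintype ι] [DecidableEq ι]
    {A : Matrix ι ι ℝ} (hA : A.IsHermitian) (i : ι) :
    (hA.eigenvalues i : ℂ) ∈ A.charpoly.aroots ℂ := by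
  have hroot : A.charpoly.IsRoot (hA.eigenvalues i) := by
    rw [← mem_roots A.charpoly_monic.ne_zero, hA.roots_charpoly_eq_eigenvalues]
    simp
  rw [mem_aroots, ← Complex.coe_algebraMap, aeval_algebraMap_apply_eq_algebraMap_eval,
    hroot.eq_zero, map_zero]
  exact ⟨A.charpoly_monic.ne_zero, rfl⟩

lemma Matrix.IsHermitian.posDef_of_forall_aroots_re_pos {ι : Type*} [Fintype ι] [DecidableEq ι]
    {A : Matrix ι ι ℝ} (hA : A.IsHermitian) (h : ∀ lam ∈ A.charpoly.aroots ℂ, 0 < lam.re) :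
    A.PosDef :=
  hA.posDef_iff_eigenvalues_pos.2 fun i => by
    simpa using h _ (hA.ofReal_eigenvalues_mem_aroots i)

lemma fderiv_fun_fderiv_apply {E F : Type*} [NormedAddCommGroup E] [NormedSpace ℝ E]
    [NormedAddCommGroup F] [NormedSpace ℝ F] {f : E → F} {x : E}
    (hf : DifferentiableAt ℝ (fderiv ℝ f) x) (v w : E) :
    fderiv ℝ (fun y => fderiv ℝ f y v) x w = fderiv ℝ (fderiv ℝ f) x w v := by
  rw [fderiv_clm_apply hf (differentiableAt_const v)]
  simp

lemma isSymm_of_eq_fderiv_fderiv {ι : Type*} [Fintype ι] [DecidableEq ι] {φ : (ι → ℝ) → ℝ}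
    {x : ι → ℝ} (hφ : ContDiffAt ℝ 2 φ x) {H : Matrix ι ι ℝ}
    (hH : ∀ a b, H a b = fderiv ℝ (fun y => fderiv ℝ φ y (Pi.single b 1)) x (Pi.single a 1)) :
    H.IsSymm := by
  have hdiff : DifferentiableAt ℝ (fderiv ℝ φ) x :=
    (hφ.fderiv_right (by norm_num)).differentiableAt one_ne_zero
  ext a b
  simp only [transpose_apply, hH, fderiv_fun_fderiv_apply hdiff]
  exact (hφ.isSymmSndFDerivAt (by simp)).eq _ _

theorem stmt_8_general {n : ℕ} (m : Fin n → ℕ)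
    (φ : (((i : Fin n) × Fin (m i)) → ℝ) → ℝ)
    (hφ : ContDiff ℝ 2 φ)
    (xstar : ((i : Fin n) × Fin (m i)) → ℝ)
    (H : Matrix ((i : Fin n) × Fin (m i)) ((i : Fin n) × Fin (m i)) ℝ)
    (hH : ∀ a b, H a b =
      fderiv ℝ (fun x => fderiv ℝ φ x (Pi.single b 1)) xstar (Pi.single a 1))
    (heig : ∀ lam ∈ H.charpoly.aroots ℂ, 0 < lam.re) :
    H.IsSymm ∧
    (∀ v : ((i : Fin n) × Fin (m i)) → ℝ, v ≠ 0 → 0 < v ⬝ᵥ H *ᵥ v) ∧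
    H.det ≠ 0 ∧
    (∀ i : Fin n, ∀ v : Fin (m i) → ℝ, v ≠ 0 →
      0 < v ⬝ᵥ (Matrix.of fun p q => H ⟨i, p⟩ ⟨i, q⟩) *ᵥ v) := by
  have hsymm : H.IsSymm := isSymm_of_eq_fderiv_fderiv hφ.contDiffAt hH
  have hpd : H.PosDef := (isHermitian_iff_isSymm.2 hsymm).posDef_of_forall_aroots_re_pos heig
  refine ⟨hsymm, fun v hv => ?_, hpd.det_pos.ne', fun i v hv => ?_⟩
  · simpa only [star_trivial] using hpd.dotProduct_mulVec_pos hv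
  · have hblock : (H.submatrix (Sigma.mk i) (Sigma.mk i)).PosDef :=
      hpd.submatrix sigma_mk_injective
    have hpos := hblock.dotProduct_mulVec_pos hv
    rwa [star_trivial] at hpos

/-- Let `φ : ℝ^m → ℝ` be `C²` with the coordinates split into blocks
`m = m₁ + ⋯ + mₙ`, and consider the potential game where each player's individual
gradient is the corresponding block of `∇φ`, so `ω = ∇φ` and `Dω = D²φ` (the Hessian).
If `x*` is a locally asymptotically stable equilibrium of `ẋ = -ω(x)`, i.e.
`∇φ(x*) = 0` and every complex eigenvalue of the Hessian `H = D²φ(x*)` has strictly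
positive real part, then `H` is symmetric positive definite, `det H ≠ 0`, and every
diagonal block of `H` is positive definite; hence `x*` is a nondegenerate differential
Nash equilibrium. -/
theorem stmt_8 {n : ℕ} (m : Fin n → ℕ)
    (φ : (((i : Fin n) × Fin (m i)) → ℝ) → ℝ)
    (hφ : ContDiff ℝ 2 φ)
    (xstar : ((i : Fin n) × Fin (m i)) → ℝ)
    (H : Matrix ((i : Fin n) × Fin (m i)) ((i : Fin n) × Fin (m i)) ℝ)
    (hH : ∀ a b, H a b =
      fderiv ℝ (fun x => fderiv ℝ φ x (Pi.single b 1)) xstar (Pi.single a 1))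
    (hcrit : fderiv ℝ φ xstar = 0)
    (heig : ∀ lam ∈ H.charpoly.aroots ℂ, 0 < lam.re) :
    H.IsSymm ∧
    (∀ v : ((i : Fin n) × Fin (m i)) → ℝ, v ≠ 0 → 0 < v ⬝ᵥ H *ᵥ v) ∧
    H.det ≠ 0 ∧
    (∀ i : Fin n, ∀ v : Fin (m i) → ℝ, v ≠ 0 →
      0 < v ⬝ᵥ (Matrix.of fun p q => H ⟨i, p⟩ ⟨i, q⟩) *ᵥ v) :=
  stmt_8_general m φ hφ xstar H hH heig
end

section
/- Let ω : ℝ^m → ℝ^m be continuously differentiable with sup_{x∈ℝ^m} ‖Dω(x)‖₂ ≤ L < ∞, fix a block decomposition m = m₁ + ⋯ + mₙ and learning rates 0 < γᵢ < 1/L, and let Γ be the diagonal matrix with i-th diagonal block γᵢ·I_{mᵢ}. Define g : ℝ^m → ℝ^m by g(x) = x − Γ ω(x). Then: (i) g is injective; (ii) for every x ∈ ℝ^m, the spectral radius of Γ Dω(x) is strictly less than 1, so the derivative Dg(x) = I − Γ Dω(x) is an invertible linear map; (iii) g is a bijection of ℝ^m with continuously differentiable inverse, i.e., g is a C¹ diffeomorphism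 of ℝ^m. -/
/-!
Let `Γ` be the diagonal matrix of learning rates. Its operator 2-norm is `maxᵢ γᵢ < 1/L`, so
`φ = Γ ∘ ω` has `‖Dφ‖ ≤ ‖Γ‖ L < 1` everywhere. Thus `g = id - φ` perturbs the identity by a
contraction, which makes it a homeomorphism of `ℝ^m`; each `Dg(x) = 1 - Dφ(x)` is invertible by
the Neumann series, so the inverse is `C¹`. The same norm bound `‖ΓDω(x)‖ < 1` controls the
complex eigenvalues of the real matrix `ΓDω(x)`: it acts on the real and imaginary parts of a
complex eigenvector separately, so its complexification has the same operator-norm bound.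
-/

open Matrix Polynomial WithLp
open scoped NNReal Matrix.Norms.L2Operator

lemma EuclideanSpace.norm_sq_eq_norm_sq_re_add_norm_sq_im {ι : Type*} [Fintype ι] (v : ι → ℂ) :
    ‖toLp 2 v‖ ^ 2 = ‖toLp 2 (Complex.re ∘ v)‖ ^ 2 + ‖toLp 2 (Complex.im ∘ v)‖ ^ 2 := by
  simp only [EuclideanSpace.norm_sq_eq, ← Finset.sum_add_distrib]
  refine Finset.sum_congr rfl fun a _ => ?_
  simp only [Function.comp_apply, Real.norm_eq_abs, sq_abs, Complex.sq_norm,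
    Complex.normSq_apply]
  ring

namespace Matrix

variable {ι : Type*} [Fintype ι]

lemma re_comp_map_ofReal_mulVec (M : Matrix ι ι ℝ) (v : ι → ℂ) :
    Complex.re ∘ (M.map (algebraMap ℝ ℂ) *ᵥ v) = M *ᵥ (Complex.re ∘ v) := by
  ext a
  simp [mulVec, dotProduct, Complex.re_sum]

lemma im_comp_map_ofReal_mulVec (M : Matrix ι ι ℝ) (v : ι → ℂ) :
    Complex.im ∘ (M.map (algebraMap ℝ ℂ) *ᵥ v) = M *ᵥ (Complex.im ∘ v) := by
  ext a
  simp [mulVec, dotProduct, Complex.im_sum]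

variable [DecidableEq ι]

lemma l2_opNorm_map_ofReal_le (M : Matrix ι ι ℝ) : ‖M.map (algebraMap ℝ ℂ)‖ ≤ ‖M‖ := by
  have hM (u : ι → ℝ) : ‖toLp 2 (M *ᵥ u)‖ ^ 2 ≤ (‖M‖ * ‖toLp 2 u‖) ^ 2 := by
    rw [cstar_norm_def]
    exact pow_le_pow_left₀ (norm_nonneg _)
      ((toEuclideanCLM (n := ι) (𝕜 := ℝ) M).le_opNorm (toLp 2 u)) 2
  rw [cstar_norm_def]
  refine ContinuousLinearMap.opNorm_le_bound _ (norm_nonneg M) fun v => ?_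
  rw [← toLp_ofLp 2 v, toEuclideanCLM_toLp]
  refine (pow_le_pow_iff_left₀ (norm_nonneg _) (by positivity) two_ne_zero).1 ?_
  rw [EuclideanSpace.norm_sq_eq_norm_sq_re_add_norm_sq_im, re_comp_map_ofReal_mulVec,
    im_comp_map_ofReal_mulVec, mul_pow, EuclideanSpace.norm_sq_eq_norm_sq_re_add_norm_sq_im]
  linarith [hM (Complex.re ∘ ofLp v), hM (Complex.im ∘ ofLp v)]

lemma norm_le_l2_opNorm_of_mem_aroots_charpoly (M : Matrix ι ι ℝ) {μ : ℂ}
    (hμ : μ ∈ M.charpoly.aroots ℂ) : ‖μ‖ ≤ ‖M‖ := by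
  cases isEmpty_or_nonempty ι
  · simp [charpoly_isEmpty] at hμ
  have hspec : μ ∈ spectrum ℂ (M.map (algebraMap ℝ ℂ)) := by
    rw [mem_spectrum_iff_isRoot_charpoly, charpoly_map, IsRoot, eval_map, ← aeval_def]
    exact (mem_aroots'.1 hμ).2
  exact (spectrum.norm_le_norm_of_mem hspec).trans (l2_opNorm_map_ofReal_le M)

lemma toEuclideanCLM_symm_apply (f : EuclideanSpace ℝ ι →L[ℝ] EuclideanSpace ℝ ι) (a b : ι) :
    (toEuclideanCLM (n := ι) (𝕜 := ℝ)).symm f a b = f (EuclideanSpace.single b 1) a := by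
  obtain ⟨A, rfl⟩ : ∃ A, toEuclideanCLM (n := ι) (𝕜 := ℝ) A = f :=
    ⟨_, StarAlgEquiv.apply_symm_apply _ f⟩
  rw [StarAlgEquiv.symm_apply_apply, EuclideanSpace.single, ← PiLp.toLp_single,
    toEuclideanCLM_toLp]
  simp [mulVec_single]

lemma l2_opNorm_toEuclideanCLM_symm (f : EuclideanSpace ℝ ι →L[ℝ] EuclideanSpace ℝ ι) :
    ‖(toEuclideanCLM (n := ι) (𝕜 := ℝ)).symm f‖ = ‖f‖ := by
  rw [cstar_norm_def, StarAlgEquiv.apply_symm_apply]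

end Matrix

section PerturbationOfIdentity

variable {E : Type*} [NormedAddCommGroup E] [NormedSpace ℝ E] [CompleteSpace E]

noncomputable def LipschitzWith.homeomorphIdSub {φ : E → E} {K : ℝ≥0} (hφ : LipschitzWith K φ)
    (hK : K < 1) : E ≃ₜ E :=
  ApproximatesLinearOn.toHomeomorph (f' := ContinuousLinearEquiv.refl ℝ E) (c := K)
    (fun x => x - φ x)
    (by
      rw [ApproximatesLinearOn.approximatesLinearOn_iff_lipschitzOnWith]
      have hsub : (fun x => x - φ x) - ⇑(ContinuousLinearEquiv.refl ℝ E : E →L[ℝ] E) = -φ := by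
        funext x
        simp
      rw [hsub]
      exact hφ.neg.lipschitzOnWith)
    (by
      rcases subsingleton_or_nontrivial E with h | h
      · exact Or.inl h
      · right
        simpa using hK)

lemma LipschitzWith.coe_homeomorphIdSub {φ : E → E} {K : ℝ≥0} (hφ : LipschitzWith K φ)
    (hK : K < 1) : ⇑(hφ.homeomorphIdSub hK) = fun x => x - φ x := rfl

theorem ContDiff.bijective_and_contDiff_invFun_id_sub {φ : E → E} {n : WithTop ℕ∞} {K : ℝ}
    (hφ : ContDiff ℝ n φ) (hn : n ≠ 0) (hK : K < 1) (hDφ : ∀ x, ‖fderiv ℝ φ x‖ ≤ K) :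
    Function.Bijective (fun x => x - φ x) ∧ ContDiff ℝ n (Function.invFun fun x => x - φ x) := by
  have hφd := hφ.differentiable hn
  have hlip : LipschitzWith K.toNNReal φ :=
    lipschitzWith_of_nnnorm_fderiv_le hφd fun x => by
      rw [← NNReal.coe_le_coe, coe_nnnorm]
      exact (hDφ x).trans (Real.le_coe_toNNReal K)
  have hK' : K.toNNReal < 1 := by simpa using hK
  set h := hlip.homeomorphIdSub hK'
  have hderiv (x : E) : HasFDerivAt h (ContinuousLinearEquiv.unitsEquiv ℝ E
      (Units.oneSub (fderiv ℝ φ x) ((hDφ x).trans_lt hK)) : E →L[ℝ] E) x :=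
    (hasFDerivAt_id x).sub (hφd x).hasFDerivAt
  rw [← hlip.coe_homeomorphIdSub hK',
    Function.invFun_eq_of_injective_of_rightInverse h.injective h.right_inv]
  exact ⟨h.bijective, h.contDiff_symm hderiv (contDiff_id.sub hφ)⟩

end PerturbationOfIdentity

/-- Let `ω : ℝ^m → ℝ^m` be `C¹` with the operator 2-norm of its
Jacobian bounded by `L` everywhere (we work on `EuclideanSpace`, so `‖fderiv ℝ ω x‖` is
the induced 2-norm). For per-agent learning rates `0 < γᵢ < 1/L` on the coordinate
blocks `m = m₁ + ⋯ + mₙ`, the simultaneous gradient-play map `g(x) = x - Γω(x)` is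
(i) injective; (ii) at every `x` the matrix `ΓDω(x)` has spectral radius `< 1` (all its
complex eigenvalues have modulus `< 1`) and `Dg(x) = I - ΓDω(x)` is invertible;
(iii) `g` is a bijection of `ℝ^m` with `C¹` inverse, i.e. a `C¹` diffeomorphism. -/
theorem stmt_11 {n : ℕ} (m : Fin n → ℕ)
    (ω : EuclideanSpace ℝ ((i : Fin n) × Fin (m i)) →
         EuclideanSpace ℝ ((i : Fin n) × Fin (m i)))
    (hω : ContDiff ℝ 1 ω)
    (L : ℝ) (hL : 0 < L)
    (hDω : ∀ x, ‖fderiv ℝ ω x‖ ≤ L)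
    (γ : Fin n → ℝ) (hγ : ∀ i, 0 < γ i ∧ γ i < 1 / L)
    (g : EuclideanSpace ℝ ((i : Fin n) × Fin (m i)) →
         EuclideanSpace ℝ ((i : Fin n) × Fin (m i)))
    (hg : ∀ (x : EuclideanSpace ℝ ((i : Fin n) × Fin (m i)))
        (a : (i : Fin n) × Fin (m i)), g x a = x a - γ a.1 * ω x a) :
    Function.Injective g ∧
    (∀ x : EuclideanSpace ℝ ((i : Fin n) × Fin (m i)),
      (∀ lam ∈ (Matrix.of fun a b : (i : Fin n) × Fin (m i) =>
          γ a.1 * fderiv ℝ ω x (EuclideanSpace.single b 1) a).charpoly.aroots ℂ,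
        ‖lam‖ < 1) ∧
      IsUnit ((1 : Matrix ((i : Fin n) × Fin (m i)) ((i : Fin n) × Fin (m i)) ℝ) -
        Matrix.of fun a b : (i : Fin n) × Fin (m i) =>
          γ a.1 * fderiv ℝ ω x (EuclideanSpace.single b 1) a)) ∧
    Function.Bijective g ∧ ContDiff ℝ 1 (Function.invFun g) := by
  set Γ : Matrix ((i : Fin n) × Fin (m i)) ((i : Fin n) × Fin (m i)) ℝ :=
    diagonal fun a => γ a.1
  have hΓ : ‖Γ‖ * L < 1 := by
    rw [l2_opNorm_diagonal, ← lt_div_iff₀ hL, pi_norm_lt_iff (by positivity)]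
    intro a
    rw [Real.norm_of_nonneg (hγ a.1).1.le]
    exact (hγ a.1).2
  have hΓDω (x) : (Matrix.of fun a b : (i : Fin n) × Fin (m i) =>
      γ a.1 * fderiv ℝ ω x (EuclideanSpace.single b 1) a) =
      Γ * (toEuclideanCLM (n := (i : Fin n) × Fin (m i)) (𝕜 := ℝ)).symm (fderiv ℝ ω x) := by
    ext a b
    simp [Γ, diagonal_mul, toEuclideanCLM_symm_apply]
  have hΓDω_norm (x) : ‖Γ * (toEuclideanCLM (n := (i : Fin n) × Fin (m i)) (𝕜 := ℝ)).symm
      (fderiv ℝ ω x)‖ < 1 := by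
    refine (l2_opNorm_mul _ _).trans_lt (lt_of_le_of_lt ?_ hΓ)
    rw [l2_opNorm_toEuclideanCLM_symm]
    exact mul_le_mul_of_nonneg_left (hDω x) (norm_nonneg Γ)
  set G := toEuclideanCLM (n := (i : Fin n) × Fin (m i)) (𝕜 := ℝ) Γ
  have hg_eq : g = fun x => x - (G ∘ ω) x := by
    funext x
    ext a
    simp [hg, G, Γ, mulVec_diagonal]
  have hDGω (x) : ‖fderiv ℝ (G ∘ ω) x‖ ≤ ‖Γ‖ * L := by
    rw [fderiv_comp x G.differentiableAt (hω.differentiable one_ne_zero x), G.fderiv]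
    exact (G.opNorm_comp_le _).trans (mul_le_mul_of_nonneg_left (hDω x) (norm_nonneg Γ))
  obtain ⟨hbij, hinv⟩ :=
    (G.contDiff.comp hω).bijective_and_contDiff_invFun_id_sub one_ne_zero hΓ hDGω
  rw [← hg_eq] at hbij hinv
  refine ⟨hbij.1, fun x => ⟨fun μ hμ => ?_, ?_⟩, hbij, hinv⟩
  · rw [hΓDω] at hμ
    exact (norm_le_l2_opNorm_of_mem_aroots_charpoly _ hμ).trans_lt (hΓDω_norm x)
  · rw [hΓDω]
    exact isUnit_one_sub_of_norm_lt_one (hΓDω_norm x)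
end
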